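/- Composition of the last crash round with the equivocation round is a strict carrier map: let σ and τ be compatible name-view simplexes of the same dimension m, let k ≥ 1 and D = m − k with D ≥ 1, and put L = C_D(σ), M = C_D(τ), N = C_D(σ ∩ τ). Let I be an interpretation map on the set of facets of C_D(σ ∪ τ) (which includes all facets of L, of M, and of N). Then, with all equivocation complexes formed using the values of I, a nonempty finite set is a simplex of both E_L(L) and E_M(M) if and only if it is a simplex of E_N(N). -/
import Mathlib


/-- `K` is an abstract simplicial complex: a finite family of finite sets closed
under taking subsets. -/
def IsComplex {α : Type*} [DecidableEq α] (K : Finset (Finset α)) : Prop :=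
  ∀ σ ∈ K, ∀ τ ⊆ σ, τ ∈ K

/-- `σ` is a facet of `K`: a simplex of `K` that is maximal under inclusion. -/
def IsFacet {α : Type*} (K : Finset (Finset α)) (σ : Finset α) : Prop :=
  σ ∈ K ∧ ∀ τ ∈ K, σ ⊆ τ → σ = τ

/-- The pseudosphere `Ψ(P', S)`: simplexes are the sets `{(i, v i) : i ∈ Q}` for
`Q ⊆ P'`, with one chosen value `v i ∈ S i` for each `i ∈ Q`. -/
def Pseudosphere {P V : Type*} [DecidableEq P] [DecidableEq V]
    (P' : Finset P) (S : P → Finset V) : Finset (Finset (P × V)) :=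
  (P'.biUnion (fun i => (S i).image (fun v => (i, v)))).powerset.filter
    (fun σ => ∀ x ∈ σ, ∀ y ∈ σ, x.1 = y.1 → x = y)

/-- A name-view simplex: a finite set of (process, view) pairs whose first
coordinates are pairwise distinct. -/
def IsNameView {P V : Type*} (σ : Finset (P × V)) : Prop :=
  ∀ x ∈ σ, ∀ y ∈ σ, x.1 = y.1 → x = y

/-- The equivocation operator `E_K(L) = ⋃_τ Ψ(names(τ), S^τ)`, the union taken over
all `(D-1)`-dimensional simplexes `τ` of `L` (i.e. `|τ| = D`), where for
`p ∈ names(τ)` the value set is `S^τ_p = {I p σ* : σ* a facet of K with σ* ⊋ τ}`.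
Here `D` is the dimension of the pure complex `K` and `I` is the value assignment. -/
def equivOp {P V W : Type*} [DecidableEq P] [DecidableEq V] [DecidableEq W]
    (D : ℕ) (I : P → Finset (P × V) → W)
    (K L : Finset (Finset (P × V))) : Finset (Finset (P × W)) :=
  (L.filter (fun τ => τ.card = D)).biUnion
    (fun τ => Pseudosphere (τ.image Prod.fst)
      (fun p => (K.filter (fun σ' => τ ⊂ σ' ∧ ∀ μ ∈ K, σ' ⊆ μ → σ' = μ)).image (I p)))

/-- The crash-failure operator
`C_D(σ) = ⋃_{τ ∈ Faces^D(σ)} Ψ(names(τ), S^{τ,σ})`,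
where for `p ∈ names(τ)` the value set `S^{τ,σ}_p` is the set of all
name-view simplexes `μ` with `τ ⊆ μ ⊆ σ`. -/
def crashOp {P V : Type*} [DecidableEq P] [DecidableEq V] (D : ℕ)
    (σ : Finset (P × V)) : Finset (Finset (P × Finset (P × V))) :=
  (σ.powerset.filter (fun τ => τ.card = D + 1)).biUnion
    (fun τ => Pseudosphere (τ.image Prod.fst)
      (fun _ => σ.powerset.filter (fun μ => τ ⊆ μ)))

section Lemmas
variable {P V W : Type*} [DecidableEq P] [DecidableEq V] [DecidableEq W]

lemma mem_pseudosphere {P' : Finset P} {S : P → Finset V} {s : Finset (P × V)} :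
    s ∈ Pseudosphere P' S ↔ IsNameView s ∧ ∀ x ∈ s, x.1 ∈ P' ∧ x.2 ∈ S x.1 := by
  unfold Pseudosphere IsNameView
  simp only [Finset.mem_filter, Finset.mem_powerset, Finset.subset_iff, Finset.mem_biUnion,
    Finset.mem_image]
  constructor
  · rintro ⟨h1, h2⟩
    refine ⟨h2, fun x hx => ?_⟩
    obtain ⟨i, hi, v, hv, hx'⟩ := h1 hx
    subst hx'
    exact ⟨hi, hv⟩
  · rintro ⟨h2, h1⟩
    exact ⟨fun {x} hx => ⟨x.1, (h1 x hx).1, x.2, (h1 x hx).2, rfl⟩, h2⟩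

lemma mem_crashOp {D : ℕ} {ρ : Finset (P × V)} {s : Finset (P × Finset (P × V))} :
    s ∈ crashOp D ρ ↔ ∃ t, t ⊆ ρ ∧ t.card = D + 1 ∧ IsNameView s ∧
      ∀ x ∈ s, x.1 ∈ t.image Prod.fst ∧ t ⊆ x.2 ∧ x.2 ⊆ ρ := by
  unfold crashOp
  simp only [Finset.mem_biUnion, Finset.mem_filter, Finset.mem_powerset, mem_pseudosphere]
  constructor
  · rintro ⟨t, ⟨htρ, htc⟩, hnv, hmem⟩
    exact ⟨t, htρ, htc, hnv, fun x hx => ⟨(hmem x hx).1, (hmem x hx).2.2, (hmem x hx).2.1⟩⟩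
  · rintro ⟨t, htρ, htc, hnv, hmem⟩
    exact ⟨t, ⟨htρ, htc⟩, hnv, fun x hx => ⟨(hmem x hx).1, (hmem x hx).2.2, (hmem x hx).2.1⟩⟩

lemma mem_equivOp {D : ℕ} {I : P → Finset (P × V) → W} {K L : Finset (Finset (P × V))}
    {s : Finset (P × W)} :
    s ∈ equivOp D I K L ↔ ∃ c ∈ L, c.card = D ∧ IsNameView s ∧
      ∀ x ∈ s, x.1 ∈ c.image Prod.fst ∧
        ∃ φ, (φ ∈ K ∧ c ⊂ φ ∧ ∀ μ ∈ K, φ ⊆ μ → φ = μ) ∧ I x.1 φ = x.2 := by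
  unfold equivOp
  simp only [Finset.mem_biUnion, Finset.mem_filter, mem_pseudosphere, Finset.mem_image]
  constructor
  · rintro ⟨c, ⟨hcL, hcc⟩, hnv, hmem⟩
    refine ⟨c, hcL, hcc, hnv, fun x hx => ⟨(hmem x hx).1, ?_⟩⟩
    obtain ⟨φ, ⟨hφK, hφ⟩, hI⟩ := (hmem x hx).2
    exact ⟨φ, ⟨hφK, hφ.1, hφ.2⟩, hI⟩
  · rintro ⟨c, hcL, hcc, hnv, hmem⟩
    refine ⟨c, ⟨hcL, hcc⟩, hnv, fun x hx => ⟨(hmem x hx).1, ?_⟩⟩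
    obtain ⟨φ, ⟨hφK, hφ1, hφ2⟩, hI⟩ := (hmem x hx).2
    exact ⟨φ, ⟨hφK, hφ1, hφ2⟩, hI⟩

end Lemmas

section Lemmas2
variable {P V W : Type*} [DecidableEq P] [DecidableEq V] [DecidableEq W]

lemma nameView_card_image {s : Finset (P × V)} (h : IsNameView s) :
    (s.image Prod.fst).card = s.card :=
  Finset.card_image_of_injOn (fun x hx y hy hxy => h x hx y hy hxy)

lemma crash_nameView {D : ℕ} {ρ : Finset (P × V)} {s : Finset (P × Finset (P × V))}
    (h : s ∈ crashOp D ρ) : IsNameView s := by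
  obtain ⟨t, -, -, hnv, -⟩ := mem_crashOp.mp h; exact hnv

lemma crash_card_le {D : ℕ} {ρ : Finset (P × V)} {s : Finset (P × Finset (P × V))}
    (h : s ∈ crashOp D ρ) : s.card ≤ D + 1 := by
  obtain ⟨t, -, htc, hnv, hmem⟩ := mem_crashOp.mp h
  calc s.card = (s.image Prod.fst).card := (nameView_card_image hnv).symm
    _ ≤ (t.image Prod.fst).card :=
        Finset.card_le_card (fun p hp => by
          obtain ⟨x, hx, rfl⟩ := Finset.mem_image.mp hp
          exact (hmem x hx).1)
    _ ≤ t.card := Finset.card_image_le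
    _ = D + 1 := htc

lemma crash_mono {D : ℕ} {ρ ρ' : Finset (P × V)} (h : ρ ⊆ ρ') :
    crashOp D ρ ⊆ crashOp D ρ' := by
  intro s hs
  obtain ⟨t, htρ, htc, hnv, hmem⟩ := mem_crashOp.mp hs
  exact mem_crashOp.mpr ⟨t, htρ.trans h, htc, hnv,
    fun x hx => ⟨(hmem x hx).1, (hmem x hx).2.1, (hmem x hx).2.2.trans h⟩⟩

lemma crash_maximal {D : ℕ} {ρ : Finset (P × V)} {φ : Finset (P × Finset (P × V))}
    (hc : φ.card = D + 1) : ∀ μ ∈ crashOp D ρ, φ ⊆ μ → φ = μ :=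
  fun μ hμ hsub => Finset.eq_of_subset_of_card_le hsub (by rw [hc]; exact crash_card_le hμ)

lemma crash_facet_union {D : ℕ} {ρ σ τ : Finset (P × V)} {φ : Finset (P × Finset (P × V))}
    (hρ : ρ ⊆ σ ∪ τ) (hφ : φ ∈ crashOp D ρ) (hc : φ.card = D + 1) :
    IsFacet (crashOp D (σ ∪ τ)) φ :=
  ⟨crash_mono hρ hφ, crash_maximal hc⟩

/-- a subset of a crash simplex whose views all lie in `ρ'` is a crash simplex over `ρ'`. -/
lemma subset_views_mem {D : ℕ} {ρ ρ' : Finset (P × V)} {ψ e : Finset (P × Finset (P × V))}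
    (hψ : ψ ∈ crashOp D ρ) (heψ : e ⊆ ψ) (hne : e.Nonempty)
    (hv : ∀ x ∈ e, x.2 ⊆ ρ') : e ∈ crashOp D ρ' := by
  obtain ⟨t, htρ, htc, hnv, hmem⟩ := mem_crashOp.mp hψ
  obtain ⟨z, hz⟩ := hne
  refine mem_crashOp.mpr ⟨t, ((hmem z (heψ hz)).2.1).trans (hv z hz), htc,
    fun x hx y hy => hnv x (heψ hx) y (heψ hy),
    fun x hx => ⟨(hmem x (heψ hx)).1, (hmem x (heψ hx)).2.1, hv x hx⟩⟩

end Lemmas2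

set_option linter.unusedSectionVars false
set_option maxHeartbeats 1000000

section Lemmas3
variable {P V W : Type*} [DecidableEq P] [DecidableEq V] [DecidableEq W]

lemma step {σ τ : Finset (P × V)} {D : ℕ} {I : P → Finset (P × Finset (P × V)) → W}
    (hcompat : IsNameView (σ ∪ τ))
    (hI : ∀ φ₁ φ₂, IsFacet (crashOp D (σ ∪ τ)) φ₁ → IsFacet (crashOp D (σ ∪ τ)) φ₂ →
      ∀ p : P, (I p φ₁ = I p φ₂ ↔
        (φ₁ = φ₂ ∨ ((φ₁ ∩ φ₂).card = D ∧ p ∈ (φ₁ ∩ φ₂).image Prod.fst))))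
    {φ e : Finset (P × Finset (P × V))} {t : Finset (P × V)} {p : P}
    (ht : t ⊆ σ ∩ τ) (htc : t.card = D + 1)
    (hφNV : IsNameView φ) (hφc : φ.card = D + 1)
    (hφmem : ∀ z ∈ φ, z.1 ∈ t.image Prod.fst ∧ t ⊆ z.2 ∧ z.2 ⊆ σ ∪ τ)
    (heφ : e ⊆ φ) (hec : e.card = D) (hev : ∀ z ∈ e, z.2 ⊆ σ ∩ τ)
    (hpe : p ∈ e.image Prod.fst) :
    ∃ ψ ∈ crashOp D (σ ∩ τ), ψ.card = D + 1 ∧ e ⊆ ψ ∧ e ≠ ψ ∧ I p ψ = I p φ := by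
  have htU : t ⊆ σ ∪ τ := ht.trans Finset.inter_subset_union
  have htNV : IsNameView t := fun x hx y hy => hcompat x (htU hx) y (htU hy)
  have heNV : IsNameView e := fun x hx y hy => hφNV x (heφ hx) y (heφ hy)
  have himg : e.image Prod.fst ⊆ t.image Prod.fst := by
    intro q hq
    obtain ⟨x, hx, rfl⟩ := Finset.mem_image.mp hq
    exact (hφmem x (heφ hx)).1
  have hcardlt : (e.image Prod.fst).card < (t.image Prod.fst).card := by
    rw [nameView_card_image heNV, nameView_card_image htNV, hec, htc]; omega
  obtain ⟨q0, hq0t, hq0e⟩ := Finset.exists_of_ssubset (Finset.ssubset_iff_subset_ne.mpr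
    ⟨himg, fun h => absurd h (by intro h; rw [h] at hcardlt; omega)⟩)
  have hq0ne : (q0, t) ∉ e := fun h => hq0e (Finset.mem_image_of_mem Prod.fst h)
  set ψ : Finset (P × Finset (P × V)) := insert (q0, t) e with hψdef
  have heψ : e ⊆ ψ := Finset.subset_insert _ _
  have hψc : ψ.card = D + 1 := by rw [hψdef, Finset.card_insert_of_notMem hq0ne, hec]
  have hψNV : IsNameView ψ := by
    intro x hx y hy hxy
    rcases Finset.mem_insert.mp hx with rfl | hx <;>
      rcases Finset.mem_insert.mp hy with rfl | hy
    · rfl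
    · exact absurd (Finset.mem_image.mpr ⟨y, hy, hxy.symm⟩) hq0e
    · exact absurd (Finset.mem_image.mpr ⟨x, hx, hxy⟩) hq0e
    · exact heNV x hx y hy hxy
  have hψN : ψ ∈ crashOp D (σ ∩ τ) := by
    refine mem_crashOp.mpr ⟨t, ht, htc, hψNV, fun x hx => ?_⟩
    rcases Finset.mem_insert.mp hx with rfl | hx
    · exact ⟨hq0t, Finset.Subset.refl t, ht⟩
    · exact ⟨(hφmem x (heφ hx)).1, (hφmem x (heφ hx)).2.1, hev x hx⟩
  have hene : e ≠ ψ := fun h => by rw [← h] at hψc; omega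
  by_cases hmem : (q0, t) ∈ φ
  · have hψφ : ψ = φ := Finset.eq_of_subset_of_card_le
      (Finset.insert_subset hmem heφ) (by omega)
    exact ⟨ψ, hψN, hψc, heψ, hene, by rw [hψφ]⟩
  · have hint : ψ ∩ φ = e := by
      ext z
      constructor
      · intro hz
        obtain ⟨hz1, hz2⟩ := Finset.mem_inter.mp hz
        rcases Finset.mem_insert.mp hz1 with rfl | hz1
        · exact absurd hz2 hmem
        · exact hz1
      · intro hz
        exact Finset.mem_inter.mpr ⟨heψ hz, heφ hz⟩
    have hφU : φ ∈ crashOp D (σ ∪ τ) :=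
      mem_crashOp.mpr ⟨t, htU, htc, hφNV, hφmem⟩
    have fψ : IsFacet (crashOp D (σ ∪ τ)) ψ :=
      ⟨crash_mono Finset.inter_subset_union hψN, crash_maximal hψc⟩
    have fφ : IsFacet (crashOp D (σ ∪ τ)) φ := ⟨hφU, crash_maximal hφc⟩
    exact ⟨ψ, hψN, hψc, heψ, hene,
      (hI ψ φ fψ fφ p).mpr (Or.inr ⟨by rw [hint]; exact hec, by rw [hint]; exact hpe⟩)⟩

end Lemmas3

section Lemmas4
variable {P V W : Type*} [DecidableEq P] [DecidableEq V] [DecidableEq W]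

lemma caseA {σ τ : Finset (P × V)} {D : ℕ} {I : P → Finset (P × Finset (P × V)) → W}
    (hD : 1 ≤ D) (hcompat : IsNameView (σ ∪ τ))
    (hI : ∀ φ₁ φ₂, IsFacet (crashOp D (σ ∪ τ)) φ₁ → IsFacet (crashOp D (σ ∪ τ)) φ₂ →
      ∀ p : P, (I p φ₁ = I p φ₂ ↔
        (φ₁ = φ₂ ∨ ((φ₁ ∩ φ₂).card = D ∧ p ∈ (φ₁ ∩ φ₂).image Prod.fst))))
    {a φ φ' : Finset (P × Finset (P × V))} {p : P}
    (hac : a.card = D) (haN : ∀ z ∈ a, z.2 ⊆ τ)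
    (hφL : φ ∈ crashOp D σ) (hφc : φ.card = D + 1) (haφ : a ⊆ φ)
    (hφ'M : φ' ∈ crashOp D τ) (hφ'c : φ'.card = D + 1)
    (hpa : p ∈ a.image Prod.fst)
    (hIpp : I p φ = I p φ') :
    ∃ ψ ∈ crashOp D (σ ∩ τ), ψ.card = D + 1 ∧ a ⊆ ψ ∧ a ≠ ψ ∧ I p ψ = I p φ := by
  obtain ⟨t, htσ, htc, hφNV, hφmem⟩ := mem_crashOp.mp hφL
  obtain ⟨t', ht'τ, ht'c, hφ'NV, hφ'mem⟩ := mem_crashOp.mp hφ'M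
  have hane : a ≠ φ := fun h => by rw [h] at hac; omega
  -- views of a lie in σ ∩ τ
  have havσ : ∀ z ∈ a, z.2 ⊆ σ ∩ τ := fun z hz =>
    Finset.subset_inter (hφmem z (haφ hz)).2.2 (haN z hz)
  have fφ : IsFacet (crashOp D (σ ∪ τ)) φ :=
    crash_facet_union Finset.subset_union_left hφL hφc
  have fφ' : IsFacet (crashOp D (σ ∪ τ)) φ' :=
    crash_facet_union Finset.subset_union_right hφ'M hφ'c
  rcases (hI φ φ' fφ fφ' p).mp hIpp with rfl | ⟨hec, hpe⟩
  · -- φ = φ' : all views lie in σ ∩ τ, so φ ∈ N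
    have hφN : φ ∈ crashOp D (σ ∩ τ) := by
      refine subset_views_mem hφL (Finset.Subset.refl φ)
        (Finset.card_pos.mp (by omega)) (fun z hz => Finset.subset_inter
          ((hφmem z hz).2.2) ((hφ'mem z hz).2.2))
    exact ⟨φ, hφN, hφc, haφ, hane, rfl⟩
  · set e := φ ∩ φ' with hedef
    have heφ : e ⊆ φ := Finset.inter_subset_left
    have hev : ∀ z ∈ e, z.2 ⊆ σ ∩ τ := fun z hz => Finset.subset_inter
      ((hφmem z (Finset.inter_subset_left hz)).2.2)
      ((hφ'mem z (Finset.inter_subset_right hz)).2.2)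
    by_cases hae : a = e
    · -- use step with e := a
      have ht : t ⊆ σ ∩ τ := by
        obtain ⟨z, hz⟩ := Finset.card_pos.mp (show 0 < a.card by omega)
        exact ((hφmem z (haφ hz)).2.1).trans (havσ z hz)
      have hφmem' : ∀ z ∈ φ, z.1 ∈ t.image Prod.fst ∧ t ⊆ z.2 ∧ z.2 ⊆ σ ∪ τ :=
        fun z hz => ⟨(hφmem z hz).1, (hφmem z hz).2.1,
          (hφmem z hz).2.2.trans Finset.subset_union_left⟩
      exact step hcompat hI ht htc hφNV hφc hφmem' haφ hac havσ hpa
    · -- a ≠ e : φ = a ∪ e, so all views of φ lie in σ ∩ τ and φ ∈ N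
      have hecard : e.card = D := hec
      have haue : a ∪ e = φ := by
        refine Finset.eq_of_subset_of_card_le (Finset.union_subset haφ heφ) ?_
        have h1 : a ⊆ a ∪ e := Finset.subset_union_left
        have h2 : a ≠ a ∪ e := by
          intro h
          exact hae (Finset.eq_of_subset_of_card_le
            (by rw [h]; exact Finset.subset_union_right) (by omega)).symm
        have := Finset.card_lt_card (Finset.ssubset_iff_subset_ne.mpr ⟨h1, h2⟩)
        omega
      have hφN : φ ∈ crashOp D (σ ∩ τ) := by
        refine subset_views_mem hφL (Finset.Subset.refl φ)
          (Finset.card_pos.mp (by omega)) (fun z hz => ?_)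
        rw [← haue] at hz
        rcases Finset.mem_union.mp hz with hz | hz
        · exact havσ z hz
        · exact hev z hz
      exact ⟨φ, hφN, hφc, haφ, hane, rfl⟩

end Lemmas4


/-- composition of the last crash round with the equivocation round is
a strict carrier map. Let `σ` and `τ` be compatible name-view simplexes of the same
dimension `m` (`|σ| = |τ| = m + 1`), let `k ≥ 1` and `D = m - k` with `D ≥ 1`, and
put `L = C_D(σ)`, `M = C_D(τ)`, `N = C_D(σ ∩ τ)`. Let `I` be an interpretation map
on the facets of `C_D(σ ∪ τ)`: for all facets `φ₁, φ₂` of `C_D(σ ∪ τ)` and every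
process `p`, `I p φ₁ = I p φ₂` iff `φ₁ = φ₂`, or `dim (φ₁ ∩ φ₂) = D - 1` (i.e.
`|φ₁ ∩ φ₂| = D`) and `p ∈ names (φ₁ ∩ φ₂)`. Then, with all equivocation complexes
formed using the values of `I`, a nonempty finite set is a simplex of both `E_L(L)`
and `E_M(M)` if and only if it is a simplex of `E_N(N)`. -/
theorem stmt7 {P V W : Type*} [DecidableEq P] [DecidableEq V] [DecidableEq W]
    (σ τ : Finset (P × V)) (hcompat : IsNameView (σ ∪ τ))
    (m k D : ℕ) (hσ : σ.card = m + 1) (hτ : τ.card = m + 1)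
    (hk : 1 ≤ k) (hDmk : D = m - k) (hD : 1 ≤ D)
    (I : P → Finset (P × Finset (P × V)) → W)
    (hI : ∀ φ₁ φ₂, IsFacet (crashOp D (σ ∪ τ)) φ₁ → IsFacet (crashOp D (σ ∪ τ)) φ₂ →
      ∀ p : P, (I p φ₁ = I p φ₂ ↔
        (φ₁ = φ₂ ∨ ((φ₁ ∩ φ₂).card = D ∧ p ∈ (φ₁ ∩ φ₂).image Prod.fst))))
    (s : Finset (P × W)) (hs : s.Nonempty) :
    (s ∈ equivOp D I (crashOp D σ) (crashOp D σ) ∧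
      s ∈ equivOp D I (crashOp D τ) (crashOp D τ)) ↔
    s ∈ equivOp D I (crashOp D (σ ∩ τ)) (crashOp D (σ ∩ τ)) := by
  constructor
  · rintro ⟨hLmem, hMmem⟩
    rw [mem_equivOp] at hLmem hMmem ⊢
    obtain ⟨a, haL, hac, hNV, hLx⟩ := hLmem
    obtain ⟨b, hbM, hbc, -, hMx⟩ := hMmem
    have haNV : IsNameView a := crash_nameView haL
    by_cases hcase : ∀ z ∈ a, z.2 ⊆ τ
    · -- Case I : all views of a lie in τ, hence in σ ∩ τ; use c := a
      obtain ⟨ta, htaσ, htac, -, hamem⟩ := mem_crashOp.mp haL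
      have haN : a ∈ crashOp D (σ ∩ τ) :=
        subset_views_mem haL (Finset.Subset.refl a) (Finset.card_pos.mp (by omega))
          (fun z hz => Finset.subset_inter (hamem z hz).2.2 (hcase z hz))
      refine ⟨a, haN, hac, hNV, fun x hx => ?_⟩
      obtain ⟨hx1, φ, ⟨hφL, haφ, hφmax⟩, hIφ⟩ := hLx x hx
      obtain ⟨hx1', φ', ⟨hφ'M, hbφ', hφ'max⟩, hIφ'⟩ := hMx x hx
      have hφc : φ.card = D + 1 := by
        have h1 := crash_card_le hφL
        have h2 := Finset.card_lt_card haφ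
        omega
      have hφ'c : φ'.card = D + 1 := by
        have h1 := crash_card_le hφ'M
        have h2 := Finset.card_lt_card hbφ'
        omega
      obtain ⟨ψ, hψN, hψc, haψ, hane, hIψ⟩ := caseA hD hcompat hI hac hcase hφL hφc
        haφ.subset hφ'M hφ'c hx1 (hIφ.trans hIφ'.symm)
      exact ⟨hx1, ψ, ⟨hψN, Finset.ssubset_iff_subset_ne.mpr ⟨haψ, hane⟩,
        crash_maximal hψc⟩, hIψ.trans hIφ⟩
    · -- Case II : some α ∈ a with α.2 ⊄ τ
      push_neg at hcase
      obtain ⟨α, hαa, hατ⟩ := hcase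
      set A' := a.erase α with hA'def
      set c : Finset (P × Finset (P × V)) := insert (α.1, σ ∩ τ) A' with hcdef
      have hαA' : (α.1, σ ∩ τ) ∉ A' := by
        intro h
        have h2 : ((α.1 : P), σ ∩ τ) = α :=
          haNV _ (Finset.mem_of_mem_erase h) α hαa rfl
        have h3 : σ ∩ τ = α.2 := congrArg Prod.snd h2
        exact hατ (h3 ▸ Finset.inter_subset_right)
      have hA'c : A'.card = D - 1 := by
        rw [hA'def, Finset.card_erase_of_mem hαa, hac]
      have hcc : c.card = D := by
        rw [hcdef, Finset.card_insert_of_notMem hαA', hA'c]; omega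
      have hα1A' : ∀ y ∈ A', y.1 ≠ α.1 := fun y hy h =>
        (Finset.mem_erase.mp hy).1 (haNV y (Finset.mem_of_mem_erase hy) α hαa h)
      have hcnames : ∀ z ∈ c, z.1 ∈ a.image Prod.fst := by
        intro z hz
        rcases Finset.mem_insert.mp hz with rfl | hz
        · exact Finset.mem_image.mpr ⟨α, hαa, rfl⟩
        · exact Finset.mem_image.mpr ⟨z, Finset.mem_of_mem_erase hz, rfl⟩
      have hcNV : IsNameView c := by
        intro z hz w hw hzw
        rcases Finset.mem_insert.mp hz with rfl | hz <;>
          rcases Finset.mem_insert.mp hw with rfl | hw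
        · rfl
        · exact absurd hzw.symm (hα1A' w hw)
        · exact absurd hzw (hα1A' z hz)
        · exact haNV z (Finset.mem_of_mem_erase hz) w (Finset.mem_of_mem_erase hw) hzw
      have main : ∀ x ∈ s, x.1 ∈ c.image Prod.fst ∧
          ∃ ψ ∈ crashOp D (σ ∩ τ), ψ.card = D + 1 ∧ c ⊆ ψ ∧ c ≠ ψ ∧ I x.1 ψ = x.2 := by
        intro x hx
        obtain ⟨hx1, φ, ⟨hφL, haφ, hφmax⟩, hIφ⟩ := hLx x hx
        obtain ⟨hx1', φ', ⟨hφ'M, hbφ', hφ'max⟩, hIφ'⟩ := hMx x hx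
        have hφc : φ.card = D + 1 := by
          have h1 := crash_card_le hφL
          have h2 := Finset.card_lt_card haφ
          omega
        have hφ'c : φ'.card = D + 1 := by
          have h1 := crash_card_le hφ'M
          have h2 := Finset.card_lt_card hbφ'
          omega
        obtain ⟨t, htσ, htc, hφNV, hφmem⟩ := mem_crashOp.mp hφL
        obtain ⟨t', ht'τ, ht'c, hφ'NV, hφ'mem⟩ := mem_crashOp.mp hφ'M
        have fφ : IsFacet (crashOp D (σ ∪ τ)) φ :=
          crash_facet_union Finset.subset_union_left hφL hφc
        have fφ' : IsFacet (crashOp D (σ ∪ τ)) φ' :=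
          crash_facet_union Finset.subset_union_right hφ'M hφ'c
        have hαφ : α ∈ φ := haφ.subset hαa
        rcases (hI φ φ' fφ fφ' x.1).mp (hIφ.trans hIφ'.symm) with rfl | ⟨hec, hpe⟩
        · exact absurd ((hφ'mem α hαφ).2.2) hατ
        set e := φ ∩ φ' with hedef
        have heφ : e ⊆ φ := Finset.inter_subset_left
        have hαe : α ∉ e := fun h => hατ ((hφ'mem α (Finset.inter_subset_right h)).2.2)
        have heerase : e = φ.erase α := by
          refine Finset.eq_of_subset_of_card_le
            (fun z hz => Finset.mem_erase.mpr ⟨fun h => hαe (h ▸ hz), heφ hz⟩) ?_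
          rw [Finset.card_erase_of_mem hαφ, hφc, hec]
          omega
        have hsd : (φ \ a).card = 1 := by
          rw [Finset.card_sdiff_of_subset haφ.subset, hφc, hac]; omega
        obtain ⟨xp, hxp⟩ := Finset.card_eq_one.mp hsd
        have hxpmem := Finset.mem_sdiff.mp (hxp ▸ Finset.mem_singleton_self xp)
        have hxpφ : xp ∈ φ := hxpmem.1
        have hxpa : xp ∉ a := hxpmem.2
        have hφins : φ = insert xp a := by
          ext z
          constructor
          · intro hz
            by_cases hza : z ∈ a
            · exact Finset.mem_insert_of_mem hza
            · have hz2 : z ∈ φ \ a := Finset.mem_sdiff.mpr ⟨hz, hza⟩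
              rw [hxp] at hz2
              rw [Finset.mem_singleton.mp hz2]
              exact Finset.mem_insert_self _ _
          · intro hz
            rcases Finset.mem_insert.mp hz with rfl | hz
            · exact hxpφ
            · exact haφ.subset hz
        have hxp1a : xp.1 ∉ a.image Prod.fst := by
          intro h
          obtain ⟨y, hy, hy1⟩ := Finset.mem_image.mp h
          have : y = xp := hφNV y (haφ.subset hy) xp hxpφ hy1
          exact hxpa (this ▸ hy)
        have hpA' : x.1 ∈ A'.image Prod.fst := by
          obtain ⟨y, hy, hy1⟩ := Finset.mem_image.mp hpe
          have hyφ : y ∈ φ := heφ hy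
          have hyα : y ≠ α := fun h => hαe (h ▸ hy)
          have hya : y ∈ a := by
            rcases Finset.mem_insert.mp (hφins ▸ hyφ) with rfl | h
            · rw [hy1] at hxp1a
              exact absurd hx1 hxp1a
            · exact h
          exact Finset.mem_image.mpr ⟨y, Finset.mem_erase.mpr ⟨hyα, hya⟩, hy1⟩
        have hpc : x.1 ∈ c.image Prod.fst := by
          obtain ⟨y, hy, hy1⟩ := Finset.mem_image.mp hpA'
          exact Finset.mem_image.mpr ⟨y, Finset.mem_insert_of_mem hy, hy1⟩
        refine ⟨hpc, ?_⟩
        have hxpe : xp ∈ e := by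
          rw [heerase]
          exact Finset.mem_erase.mpr ⟨fun h => hxpa (h ▸ hαa), hxpφ⟩
        have hxpv : xp.2 ⊆ σ ∩ τ := Finset.subset_inter ((hφmem xp hxpφ).2.2)
          ((hφ'mem xp (Finset.inter_subset_right hxpe)).2.2)
        have ht : t ⊆ σ ∩ τ := ((hφmem xp hxpφ).2.1).trans hxpv
        have hxpc : xp ∉ c := by
          intro h
          rcases Finset.mem_insert.mp h with h | h
          · have h1 : xp.1 = α.1 := by rw [h]
            exact hxp1a (Finset.mem_image.mpr ⟨α, hαa, h1.symm⟩)
          · exact hxpa (Finset.mem_of_mem_erase h)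
        set ψ : Finset (P × Finset (P × V)) := insert xp c with hψdef
        have hψc : ψ.card = D + 1 := by
          rw [hψdef, Finset.card_insert_of_notMem hxpc, hcc]
        have hψNV : IsNameView ψ := by
          intro z hz w hw hzw
          rcases Finset.mem_insert.mp hz with hz1 | hz1
          · rcases Finset.mem_insert.mp hw with hw1 | hw1
            · rw [hz1, hw1]
            · exfalso
              rw [hz1] at hzw
              exact hxp1a (by rw [hzw]; exact hcnames w hw1)
          · rcases Finset.mem_insert.mp hw with hw1 | hw1
            · exfalso
              rw [hw1] at hzw
              exact hxp1a (by rw [← hzw]; exact hcnames z hz1)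
            · exact hcNV z hz1 w hw1 hzw
        have hψmem : ψ ∈ crashOp D (σ ∩ τ) := by
          refine mem_crashOp.mpr ⟨t, ht, htc, hψNV, fun z hz => ?_⟩
          rcases Finset.mem_insert.mp hz with rfl | hz
          · exact ⟨(hφmem z hxpφ).1, (hφmem z hxpφ).2.1, hxpv⟩
          rcases Finset.mem_insert.mp hz with rfl | hz
          · exact ⟨(hφmem α hαφ).1, ht, Finset.Subset.refl _⟩
          · have hzφ : z ∈ φ := haφ.subset (Finset.mem_of_mem_erase hz)
            have hze : z ∈ e := by
              rw [heerase]
              exact Finset.mem_erase.mpr ⟨(Finset.mem_erase.mp hz).1, hzφ⟩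
            exact ⟨(hφmem z hzφ).1, (hφmem z hzφ).2.1,
              Finset.subset_inter (hφmem z hzφ).2.2
                ((hφ'mem z (Finset.inter_subset_right hze)).2.2)⟩
        have hint : ψ ∩ φ = e := by
          ext z
          constructor
          · intro hz
            obtain ⟨hz1, hz2⟩ := Finset.mem_inter.mp hz
            rcases Finset.mem_insert.mp hz1 with rfl | hz1
            · exact hxpe
            rcases Finset.mem_insert.mp hz1 with rfl | hz1
            · have h2 : ((α.1 : P), σ ∩ τ) = α := hφNV _ hz2 α hαφ rfl
              have h3 : σ ∩ τ = α.2 := congrArg Prod.snd h2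
              exact absurd (h3 ▸ Finset.inter_subset_right) hατ
            · rw [heerase]
              exact Finset.mem_erase.mpr ⟨(Finset.mem_erase.mp hz1).1,
                haφ.subset (Finset.mem_of_mem_erase hz1)⟩
          · intro hz
            refine Finset.mem_inter.mpr ⟨?_, heφ hz⟩
            have hzφ : z ∈ φ := heφ hz
            rcases Finset.mem_insert.mp (hφins ▸ hzφ) with rfl | hza
            · exact Finset.mem_insert_self _ _
            · have hzα : z ≠ α := fun h => hαe (h ▸ hz)
              exact Finset.mem_insert_of_mem
                (Finset.mem_insert_of_mem (Finset.mem_erase.mpr ⟨hzα, hza⟩))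
        have fψ : IsFacet (crashOp D (σ ∪ τ)) ψ :=
          crash_facet_union Finset.inter_subset_union hψmem hψc
        have hIψφ : I x.1 ψ = I x.1 φ := (hI ψ φ fψ fφ x.1).mpr
          (Or.inr ⟨by rw [hint]; exact hec, by rw [hint]; exact hpe⟩)
        exact ⟨ψ, hψmem, hψc, Finset.subset_insert _ _,
          fun h => by rw [← h] at hψc; omega, hIψφ.trans hIφ⟩
      obtain ⟨x1, hx1s⟩ := hs
      obtain ⟨-, ψ1, hψ1N, -, hcψ1, -, -⟩ := main x1 hx1s
      have hcN : c ∈ crashOp D (σ ∩ τ) := by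
        obtain ⟨tψ, h1, h2, h3, h4⟩ := mem_crashOp.mp hψ1N
        exact subset_views_mem hψ1N hcψ1 ⟨(α.1, σ ∩ τ), Finset.mem_insert_self _ _⟩
          (fun z hz => (h4 z (hcψ1 hz)).2.2)
      refine ⟨c, hcN, hcc, hNV, fun x hx => ?_⟩
      obtain ⟨h1, ψ, hψN, hψc, hcψ, hcne, hIψ⟩ := main x hx
      exact ⟨h1, ψ, ⟨hψN, Finset.ssubset_iff_subset_ne.mpr ⟨hcψ, hcne⟩,
        crash_maximal hψc⟩, hIψ⟩
  · intro hNmem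
    rw [mem_equivOp] at hNmem
    obtain ⟨c, hcN, hcc, hNV, hx⟩ := hNmem
    constructor <;> rw [mem_equivOp]
    · refine ⟨c, crash_mono Finset.inter_subset_left hcN, hcc, hNV, fun x hxs => ?_⟩
      obtain ⟨h1, φ, ⟨hφN, hcφ, -⟩, hIφ⟩ := hx x hxs
      have hφc : φ.card = D + 1 := by
        have h1 := crash_card_le hφN
        have h2 := Finset.card_lt_card hcφ
        omega
      exact ⟨h1, φ, ⟨crash_mono Finset.inter_subset_left hφN, hcφ,
        crash_maximal hφc⟩, hIφ⟩
    · refine ⟨c, crash_mono Finset.inter_subset_right hcN, hcc, hNV, fun x hxs => ?_⟩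
      obtain ⟨h1, φ, ⟨hφN, hcφ, -⟩, hIφ⟩ := hx x hxs
      have hφc : φ.card = D + 1 := by
        have h1 := crash_card_le hφN
        have h2 := Finset.card_lt_card hcφ
        omega
      exact ⟨h1, φ, ⟨crash_mono Finset.inter_subset_right hφN, hcφ,
        crash_maximal hφc⟩, hIφ⟩
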